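/- With hypotheses as in Theorem 2.1, if $K(m,n)=\langle Ja(m),a(n)\rangle/(m-n)$ for $m\ne n$, then $K(m+1,n+1)-K(m,n)=-\phi(m)\phi(n)$ for all $m\ne n$, where $\phi(j)=|\lambda|^{1/2}\langle v_\lambda, B(j)a(j)\rangle$. -/

import Mathlib

/-!
The spectral data force `C = λ • v vᵀ`: the kernel vector is orthogonal to `v`, so in dimension
two it spans `v⊥` and `C` kills it. Writing `a (j + 1) = T j a j`, the numerator of
`K (m + 1) (n + 1) - K m n` becomes `⟨a n, (T nᵀ J T m - J) a m⟩`, which the Christoffel–Darboux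
type identity turns into `(m - n) ⟨B n a n, C B m a m⟩ = (m - n) λ ⟨v, B n a n⟩ ⟨v, B m a m⟩`.
-/

open Matrix Filter

namespace Matrix

section Bilinear

variable {n R : Type*} [Fintype n] [CommRing R]

theorem mulVec_mulVec_dotProduct_mulVec (J S T : Matrix n n R) (x y : n → R) :
    (J *ᵥ (T *ᵥ x)) ⬝ᵥ (S *ᵥ y) = y ⬝ᵥ (Sᵀ * J * T) *ᵥ x := by
  rw [← mulVec_mulVec, ← mulVec_mulVec, dotProduct_mulVec y Sᵀ, vecMul_transpose, dotProduct_comm]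

theorem mulVec_mulVec_dotProduct_mulVec_sub (J S T : Matrix n n R) (x y : n → R) :
    (J *ᵥ (T *ᵥ x)) ⬝ᵥ (S *ᵥ y) - (J *ᵥ x) ⬝ᵥ y = y ⬝ᵥ (Sᵀ * J * T - J) *ᵥ x := by
  rw [mulVec_mulVec_dotProduct_mulVec, sub_mulVec, dotProduct_sub, dotProduct_comm (J *ᵥ x)]

theorem dotProduct_transpose_mul_smul_vecMulVec_mul_mulVec (S T : Matrix n n R) (r : R)
    (v x y : n → R) :
    y ⬝ᵥ (Sᵀ * (r • vecMulVec v v) * T) *ᵥ x = r * ((v ⬝ᵥ T *ᵥ x) * (v ⬝ᵥ S *ᵥ y)) := by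
  rw [← mulVec_mulVec_dotProduct_mulVec, smul_mulVec, vecMulVec_mulVec, smul_dotProduct,
    op_smul_eq_smul, smul_dotProduct, smul_eq_mul, smul_eq_mul]

variable [NoZeroDivisors R]

theorem IsSymm.dotProduct_eq_zero_of_mulVec_eq_smul {C : Matrix n n R} (hC : C.IsSymm)
    {r : R} (hr : r ≠ 0) {v w : n → R} (hv : C *ᵥ v = r • v) (hw : C *ᵥ w = 0) :
    v ⬝ᵥ w = 0 := by
  have h : r * (v ⬝ᵥ w) = 0 := by
    rw [← smul_eq_mul, ← smul_dotProduct, ← hv, dotProduct_comm, dotProduct_mulVec,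
      ← hC.eq, vecMul_transpose, hw, zero_dotProduct]
  exact (mul_eq_zero.mp h).resolve_left hr

end Bilinear

section FinTwo

variable {R : Type*} [CommRing R]

theorem vecMulVec_self_add_vecMulVec_rot {v : Fin 2 → R} (hv : v ⬝ᵥ v = 1) :
    vecMulVec v v + vecMulVec ![-v 1, v 0] ![-v 1, v 0] = 1 := by
  simp only [dotProduct, Fin.sum_univ_two] at hv
  ext i j
  fin_cases i <;> fin_cases j <;> simp [vecMulVec_apply] <;>
    first | ring1 | linear_combination hv

theorem eq_smul_rot_of_dotProduct_eq_zero {v w : Fin 2 → R} (hv : v ⬝ᵥ v = 1)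
    (hvw : v ⬝ᵥ w = 0) : w = (v 0 * w 1 - v 1 * w 0) • ![-v 1, v 0] := by
  simp only [dotProduct, Fin.sum_univ_two] at hv hvw
  ext i
  fin_cases i <;> simp
  · linear_combination (-w 0) * hv + v 0 * hvw
  · linear_combination (-w 1) * hv + v 1 * hvw

theorem IsSymm.eq_smul_vecMulVec [NoZeroDivisors R] {C : Matrix (Fin 2) (Fin 2) R}
    (hC : C.IsSymm) {r : R} (hr : r ≠ 0) {v : Fin 2 → R} (hv : C *ᵥ v = r • v)
    (hvunit : v ⬝ᵥ v = 1) (hker : ∃ w : Fin 2 → R, w ≠ 0 ∧ C *ᵥ w = 0) :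
    C = r • vecMulVec v v := by
  obtain ⟨w, hw, hCw⟩ := hker
  set u : Fin 2 → R := ![-v 1, v 0]
  have hwu := eq_smul_rot_of_dotProduct_eq_zero hvunit
    (hC.dotProduct_eq_zero_of_mulVec_eq_smul hr hv hCw)
  have hCu : C *ᵥ u = 0 := by
    rw [hwu, mulVec_smul, smul_eq_zero] at hCw
    exact hCw.resolve_left fun hc => hw (by rw [hwu, hc, zero_smul])
  calc C = C * (vecMulVec v v + vecMulVec u u) := by
        rw [vecMulVec_self_add_vecMulVec_rot hvunit, Matrix.mul_one]
    _ = r • vecMulVec v v := by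
        rw [Matrix.mul_add, mul_vecMulVec, mul_vecMulVec, hv, hCu, zero_vecMulVec, add_zero,
          smul_vecMulVec]

end FinTwo

end Matrix

theorem tracy_widom_kernel_difference_general
    (T B : ℕ → Matrix (Fin 2) (Fin 2) ℝ) (a : ℕ → Fin 2 → ℝ)
    (C : Matrix (Fin 2) (Fin 2) ℝ) (lam : ℝ) (v : Fin 2 → ℝ)
    (J : Matrix (Fin 2) (Fin 2) ℝ)
    (hrec : ∀ j, 1 ≤ j → a (j + 1) = T j *ᵥ a j)
    (hCsymm : C.IsSymm) (hlam : lam < 0)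
    (hv : C *ᵥ v = lam • v) (hvunit : v ⬝ᵥ v = 1)
    (hker : ∃ w : Fin 2 → ℝ, w ≠ 0 ∧ C *ᵥ w = 0)
    (hTW : ∀ m n : ℕ, 1 ≤ m → 1 ≤ n → m ≠ n →
      (1 / ((m : ℝ) - n)) • ((T n)ᵀ * J * T m - J) = (B n)ᵀ * C * B m)
    (phi : ℕ → ℝ)
    (hphi : ∀ j, phi j = Real.sqrt |lam| * (v ⬝ᵥ (B j *ᵥ a j)))
    (K : ℕ → ℕ → ℝ)
    (hK : ∀ m n : ℕ, m ≠ n → K m n = ((J *ᵥ a m) ⬝ᵥ a n) / ((m : ℝ) - n)) :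
    ∀ m n : ℕ, 1 ≤ m → 1 ≤ n → m ≠ n →
      K (m + 1) (n + 1) - K m n = -(phi m * phi n) := by
  have hC : C = lam • vecMulVec v v := hCsymm.eq_smul_vecMulVec hlam.ne hv hvunit hker
  have hsqrt : Real.sqrt |lam| * Real.sqrt |lam| = -lam := by
    rw [Real.mul_self_sqrt (abs_nonneg lam), abs_of_neg hlam]
  intro m n hm hn hmn
  have hshift : ((m + 1 : ℕ) : ℝ) - (n + 1 : ℕ) = m - n := by push_cast; ring
  calc K (m + 1) (n + 1) - K m n
      = 1 / ((m : ℝ) - n) * (a n ⬝ᵥ ((T n)ᵀ * J * T m - J) *ᵥ a m) := by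
        rw [hK _ _ (by omega), hK m n hmn, hrec m hm, hrec n hn, hshift, ← sub_div,
          mulVec_mulVec_dotProduct_mulVec_sub, one_div_mul_eq_div]
    _ = a n ⬝ᵥ ((B n)ᵀ * C * B m) *ᵥ a m := by
        rw [← hTW m n hm hn hmn, smul_mulVec, dotProduct_smul, smul_eq_mul]
    _ = -(phi m * phi n) := by
        rw [hC, dotProduct_transpose_mul_smul_vecMulVec_mul_mulVec, hphi, hphi]
        linear_combination (v ⬝ᵥ B m *ᵥ a m) * (v ⬝ᵥ B n *ᵥ a n) * hsqrt

/-- The key difference identity (2.8) in the proof of Theorem 2.1. -/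
theorem tracy_widom_kernel_difference
    (T B : ℕ → Matrix (Fin 2) (Fin 2) ℝ) (a : ℕ → Fin 2 → ℝ)
    (C : Matrix (Fin 2) (Fin 2) ℝ) (lam : ℝ) (v : Fin 2 → ℝ)
    (J : Matrix (Fin 2) (Fin 2) ℝ) (hJ : J = !![0, -1; 1, 0])
    (hrec : ∀ j, 1 ≤ j → a (j + 1) = T j *ᵥ a j)
    (hdecay : Tendsto a atTop (nhds 0))
    (hsum : Summable (fun j => (B j *ᵥ a j) ⬝ᵥ (B j *ᵥ a j)))
    (hCsymm : C.IsSymm) (hlam : lam < 0)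
    (hv : C *ᵥ v = lam • v) (hvunit : v ⬝ᵥ v = 1)
    (hker : ∃ w : Fin 2 → ℝ, w ≠ 0 ∧ C *ᵥ w = 0)
    (hTW : ∀ m n : ℕ, 1 ≤ m → 1 ≤ n → m ≠ n →
      (1 / ((m : ℝ) - n)) • ((T n)ᵀ * J * T m - J) = (B n)ᵀ * C * B m)
    (phi : ℕ → ℝ)
    (hphi : ∀ j, phi j = Real.sqrt |lam| * (v ⬝ᵥ (B j *ᵥ a j)))
    (K : ℕ → ℕ → ℝ)
    (hK : ∀ m n : ℕ, m ≠ n → K m n = ((J *ᵥ a m) ⬝ᵥ a n) / ((m : ℝ) - n)) :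
    ∀ m n : ℕ, 1 ≤ m → 1 ≤ n → m ≠ n →
      K (m + 1) (n + 1) - K m n = -(phi m * phi n) :=
  tracy_widom_kernel_difference_general T B a C lam v J hrec hCsymm hlam hv hvunit hker hTW phi hphi
    K hK
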